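/- Let S ⊆ P_n be the set of multipartitions which are single shapes or double shapes whose two boxes lie in different rows of the floor table (l₁ ≠ l₂). Then the shift map σ restricts to a bijection of S onto itself, and for all λ, μ ∈ S one has λ ⊴' μ if and only if σ(λ) ⊴' σ(μ); that is, σ is a poset automorphism of (S, ⊴'). -/

import Mathlib

/-- The total order on boxes `(i,l)`: `(i,l) ≤ (i',l')` iff `l < l'`, or `l = l'`
and `i ≤ i'`. -/
def bLE {p d : ℕ} (b b' : Fin p × Fin d) : Prop :=
  b.2 < b'.2 ∨ (b.2 = b'.2 ∧ b.1 ≤ b'.1)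

/-- The strict version of the total order on boxes. -/
def bLT {p d : ℕ} (b b' : Fin p × Fin d) : Prop :=
  b.2 < b'.2 ∨ (b.2 = b'.2 ∧ b.1 < b'.1)

/-- The partial order `≤'` on boxes: `(i,l) ≤' (i',l')` iff `l < l'` or
`(i,l) = (i',l')`. -/
def bLE' {p d : ℕ} (b b' : Fin p × Fin d) : Prop :=
  b.2 < b'.2 ∨ b = b'

/-- A 3D multipartition of `n` with at most two nonempty components: either a
single column of `n` nodes on a box, or two columns of sizes `c₁ ≥ 1` and
`n - c₁ ≥ 1` on boxes `b₁ < b₂` (in the total order). -/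
inductive MP (p d n : ℕ) : Type where
  | single (b : Fin p × Fin d) : MP p d n
  | double (b₁ b₂ : Fin p × Fin d) (c₁ : ℕ)
      (hlt : bLT b₁ b₂) (hc1 : 1 ≤ c₁) (hc2 : c₁ < n) : MP p d n

/-- The dominance-type relation on multipartitions associated to a relation `rB`
on boxes; with `rB = bLE` this is `⊴` and with `rB = bLE'` this is `⊴'`.
For doubles, `a = c₁ - c₂ = 2c₁ - n`. -/
def dom {p d n : ℕ} (rB : (Fin p × Fin d) → (Fin p × Fin d) → Prop) :
    MP p d n → MP p d n → Prop
  | .single b₁, .single b₂ => rB b₁ b₂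
  | .single _, .double _ _ _ _ _ _ => False
  | .double b₁ _ _ _ _ _, .single b₃ => rB b₁ b₃
  | .double b₁ b₂ c _ _ _, .double b₃ b₄ c' _ _ _ =>
      rB b₁ b₃ ∧ rB b₂ b₄ ∧
      (|2 * (c : ℤ) - n| < |2 * (c' : ℤ) - n| ∨
       (|2 * (c : ℤ) - n| = |2 * (c' : ℤ) - n| ∧ 2 * (c : ℤ) - n ≥ 2 * (c' : ℤ) - n) ∨
       (|2 * (c : ℤ) - n| = |2 * (c' : ℤ) - n| ∧ 2 * (c : ℤ) - n < 2 * (c' : ℤ) - n ∧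
        rB b₂ b₃))

instance {p d : ℕ} (b b' : Fin p × Fin d) : Decidable (bLT b b') := by
  unfold bLT; infer_instance

/-- Cyclic shift of a box one column to the left. -/
def shiftBox {p d : ℕ} [NeZero p] (b : Fin p × Fin d) : Fin p × Fin d :=
  (b.1 - 1, b.2)

/-- The shift map `σ` on multipartitions: each component is moved one column to
the left (cyclically); for a double shape the two resulting boxes are re-listed
in increasing total order. -/
def shiftMP {p d n : ℕ} [NeZero p] : MP p d n → MP p d n
  | .single b => .single (shiftBox b)
  | .double b₁ b₂ c₁ hlt hc1 hc2 =>
      if h : bLT (shiftBox b₁) (shiftBox b₂) then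
        .double (shiftBox b₁) (shiftBox b₂) c₁ h hc1 hc2
      else
        .double (shiftBox b₂) (shiftBox b₁) (n - c₁)
          (by
            rcases hlt with hl | ⟨hl, hi⟩
            · exact absurd (Or.inl hl) h
            · refine Or.inr ⟨hl.symm, ?_⟩
              have hne : b₂.1 - 1 ≠ b₁.1 - 1 := by
                intro hEq
                exact absurd (congrArg (· + 1) hEq) (by
                  simpa [sub_add_cancel] using (ne_of_lt hi).symm)
              have : ¬ (b₁.1 - 1 < b₂.1 - 1) := by
                intro hlt'
                exact h (Or.inr ⟨hl, hlt'⟩)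
              exact lt_of_le_of_ne (not_lt.mp this) hne)
          (by omega) (by omega)

/-- The set `S` of multipartitions which are single shapes or double shapes whose
two boxes lie in different rows of the floor table. -/
def rowSep {p d n : ℕ} : Set (MP p d n) :=
  {l | match l with
    | .single _ => True
    | .double b₁ b₂ _ _ _ _ => b₁.2 ≠ b₂.2}

/-!
On `S` the two boxes of a double shape lie in different rows, so the shifted boxes keep their
total order: `σ` never swaps them and never changes `a`. Hence on `S` the shift map just moves
every box by the row-preserving permutation `(i, l) ↦ (i - 1, l)` of `𝒦`, and `≤'` only
compares rows and tests equality, both of which that permutation preserves.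
-/

section Boxes

variable {p d : ℕ} [NeZero p]

@[simp]
lemma shiftBox_snd (b : Fin p × Fin d) : (shiftBox b).2 = b.2 := rfl

lemma shiftBox_injective : Function.Injective (shiftBox : Fin p × Fin d → Fin p × Fin d) := by
  rintro ⟨i, l⟩ ⟨j, m⟩ h
  simp only [shiftBox, Prod.mk.injEq, sub_left_inj] at h
  rw [h.1, h.2]

lemma shiftBox_surjective : Function.Surjective (shiftBox : Fin p × Fin d → Fin p × Fin d) :=
  Finite.injective_iff_surjective.mp shiftBox_injective

lemma bLE'_shiftBox_iff {b b' : Fin p × Fin d} : bLE' (shiftBox b) (shiftBox b') ↔ bLE' b b' := by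
  simp only [bLE', shiftBox_snd, shiftBox_injective.eq_iff]

end Boxes

lemma snd_lt_of_bLT_of_snd_ne {p d : ℕ} {b₁ b₂ : Fin p × Fin d} (h : bLT b₁ b₂)
    (hne : b₁.2 ≠ b₂.2) : b₁.2 < b₂.2 :=
  h.resolve_right fun h' => hne h'.1

section Shift

variable {p d n : ℕ} [NeZero p]

@[simp]
lemma shiftMP_single (b : Fin p × Fin d) :
    shiftMP (MP.single b : MP p d n) = MP.single (shiftBox b) := rfl

lemma shiftMP_double_of_snd_ne {b₁ b₂ : Fin p × Fin d} {c : ℕ} {hlt : bLT b₁ b₂} {h1 : 1 ≤ c}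
    {h2 : c < n} (hne : b₁.2 ≠ b₂.2) :
    shiftMP (MP.double b₁ b₂ c hlt h1 h2) =
      MP.double (shiftBox b₁) (shiftBox b₂) c
        (Or.inl (snd_lt_of_bLT_of_snd_ne hlt hne : b₁.2 < b₂.2)) h1 h2 :=
  dif_pos _

lemma shiftMP_mapsTo_rowSep : Set.MapsTo (shiftMP : MP p d n → MP p d n) rowSep rowSep := by
  rintro (b | ⟨b₁, b₂, c, hlt, h1, h2⟩) hl
  · trivial
  · rw [shiftMP_double_of_snd_ne hl]
    exact hl

lemma shiftMP_injOn_rowSep : Set.InjOn (shiftMP : MP p d n → MP p d n) rowSep := by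
  rintro (b | ⟨b₁, b₂, c, hlt, h1, h2⟩) hl (b' | ⟨b₃, b₄, c', hlt', h1', h2'⟩) hm h
  · simpa [shiftBox_injective.eq_iff] using h
  · simp [shiftMP_double_of_snd_ne hm] at h
  · simp [shiftMP_double_of_snd_ne hl] at h
  · rw [shiftMP_double_of_snd_ne hl, shiftMP_double_of_snd_ne hm] at h
    obtain ⟨e₁, e₂, rfl⟩ := MP.double.inj h
    obtain rfl := shiftBox_injective e₁
    obtain rfl := shiftBox_injective e₂
    rfl

lemma shiftMP_surjOn_rowSep : Set.SurjOn (shiftMP : MP p d n → MP p d n) rowSep rowSep := by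
  rintro (b | ⟨b₁, b₂, c, hlt, h1, h2⟩) hm
  · obtain ⟨a, rfl⟩ := shiftBox_surjective b
    exact ⟨.single a, trivial, rfl⟩
  · obtain ⟨a₁, rfl⟩ := shiftBox_surjective b₁
    obtain ⟨a₂, rfl⟩ := shiftBox_surjective b₂
    have hrow : a₁.2 < a₂.2 :=
      snd_lt_of_bLT_of_snd_ne (b₁ := shiftBox a₁) (b₂ := shiftBox a₂) hlt hm
    exact ⟨.double a₁ a₂ c (Or.inl hrow) h1 h2, hrow.ne, shiftMP_double_of_snd_ne hrow.ne⟩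

lemma dom_bLE'_shiftMP_iff {l m : MP p d n} (hl : l ∈ rowSep) (hm : m ∈ rowSep) :
    dom bLE' (shiftMP l) (shiftMP m) ↔ dom bLE' l m := by
  rcases l with b | ⟨b₁, b₂, c, hlt, h1, h2⟩ <;> rcases m with b' | ⟨b₃, b₄, c', hlt', h1', h2'⟩
  · exact bLE'_shiftBox_iff
  · rw [shiftMP_double_of_snd_ne hm]
    rfl
  · rw [shiftMP_double_of_snd_ne hl]
    exact bLE'_shiftBox_iff
  · rw [shiftMP_double_of_snd_ne hl, shiftMP_double_of_snd_ne hm]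
    simp only [dom, bLE'_shiftBox_iff]

end Shift

theorem shiftMP_posetAut_on_rowSep (p d n : ℕ) [NeZero p] :
    Set.BijOn (shiftMP : MP p d n → MP p d n) rowSep rowSep ∧
    (∀ l ∈ (rowSep : Set (MP p d n)), ∀ m ∈ (rowSep : Set (MP p d n)),
      (dom bLE' l m ↔ dom bLE' (shiftMP l) (shiftMP m))) :=
  ⟨⟨shiftMP_mapsTo_rowSep, shiftMP_injOn_rowSep, shiftMP_surjOn_rowSep⟩,
    fun _ hl _ hm => (dom_bLE'_shiftMP_iff hl hm).symm⟩
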